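/- (Hölder–L² interpolation bound for the sup norm, core of Corollary 1.8) Let d ≥ 1 be an integer, θ ∈ (0,1], and L > 0. Let g : ℝᵈ → ℝ be a continuous function satisfying |g(x) − g(y)| ≤ L·‖x − y‖^θ for all x, y ∈ ℝᵈ. Then for every point y ∈ ℝᵈ, ω_d · (|g(y)|/2)² · (|g(y)|/(2L))^{d/θ} ≤ ∫_{ℝᵈ} g(x)² dx, where ω_d denotes the Lebesgue volume of the unit ball in ℝᵈ. In particular, if g ∈ L²(ℝᵈ), then ‖g‖_∞^{(2θ+d)/θ} ≤ 2^{(2θ+d)/θ} · ω_d⁻¹ · L^{d/θ} · ‖g‖²_{L²}. -/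

import Mathlib

/-!
If `|g x - g y| ≤ L ‖x - y‖^θ`, then `|g| ≥ |g y| / 2` on the ball of radius
`r = (|g y| / (2L))^{1/θ}` around `y`, whose volume is `ω_d r^d`. Hence `∫ g²` is at least
`ω_d (|g y|/2)² (|g y|/(2L))^{d/θ}`, a multiple of `|g y|^{2 + d/θ}`; taking the supremum over `y`
bounds the sup norm.
-/

open MeasureTheory Metric Module

theorem const_mul_measure_le_lintegral {α : Type*} [MeasurableSpace α] {μ : Measure α}
    {s : Set α} (hs : MeasurableSet s) {c : ENNReal} {f : α → ENNReal}
    (h : ∀ x ∈ s, c ≤ f x) : c * μ s ≤ ∫⁻ x, f x ∂μ :=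
  calc c * μ s = ∫⁻ _ in s, c ∂μ := (setLIntegral_const s c).symm
    _ ≤ ∫⁻ x in s, f x ∂μ := setLIntegral_mono' hs h
    _ ≤ ∫⁻ x, f x ∂μ := setLIntegral_le_lintegral s f

theorem toReal_eLpNorm_top_rpow_le {α F : Type*} [MeasurableSpace α] [NormedAddCommGroup F]
    {μ : Measure α} {f : α → F} {p B : ℝ} (hp : 0 < p) (hB : 0 ≤ B)
    (h : ∀ x, ‖f x‖ ^ p ≤ B) : (eLpNorm f ⊤ μ).toReal ^ p ≤ B := by
  have hbound (x : α) : ‖f x‖ ≤ B ^ p⁻¹ :=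
    (Real.le_rpow_inv_iff_of_pos (norm_nonneg _) hB hp).2 (h x)
  have hsup : (eLpNorm f ⊤ μ).toReal ≤ B ^ p⁻¹ := by
    refine ENNReal.toReal_le_of_le_ofReal (by positivity) ?_
    rw [eLpNorm_exponent_top]
    exact eLpNormEssSup_le_of_ae_bound (ae_of_all _ hbound)
  calc (eLpNorm f ⊤ μ).toReal ^ p ≤ (B ^ p⁻¹) ^ p := by gcongr
    _ = B := Real.rpow_inv_rpow hB hp.ne'

theorem rpow_le_of_mul_sq_mul_rpow_le {V a L q I : ℝ} (hV : 0 < V) (ha : 0 ≤ a) (hL : 0 < L)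
    (hq : 0 ≤ q)
    (h : V * (a / 2) ^ 2 * (a / (2 * L)) ^ q ≤ I) :
    a ^ (2 + q) ≤ 2 ^ (2 + q) * V⁻¹ * L ^ q * I := by
  have hsplit : V * (a / 2) ^ 2 * (a / (2 * L)) ^ q = V * a ^ (2 + q) / (2 ^ (2 + q) * L ^ q) := by
    rw [Real.div_rpow ha (by positivity), Real.mul_rpow zero_le_two hL.le,
      Real.rpow_add_of_nonneg ha zero_le_two hq, Real.rpow_add two_pos]
    norm_num
    field_simp
    ring
  rw [hsplit, div_le_iff₀ (by positivity)] at h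
  calc a ^ (2 + q) = V⁻¹ * (V * a ^ (2 + q)) := by field_simp
    _ ≤ V⁻¹ * (I * (2 ^ (2 + q) * L ^ q)) := by gcongr
    _ = 2 ^ (2 + q) * V⁻¹ * L ^ q * I := by ring

section Holder

variable {E : Type*} [NormedAddCommGroup E] {θ L : ℝ} {g : E → ℝ}

theorem half_abs_le_abs_of_mem_ball_of_holder (hθ : 0 < θ) (hL : 0 < L)
    (hHolder : ∀ x y, |g x - g y| ≤ L * ‖x - y‖ ^ θ) {x y : E}
    (hx : x ∈ ball y ((|g y| / (2 * L)) ^ θ⁻¹)) : |g y| / 2 ≤ |g x| := by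
  have hdist : ‖x - y‖ ^ θ ≤ |g y| / (2 * L) := by
    rw [mem_ball, dist_eq_norm] at hx
    calc ‖x - y‖ ^ θ ≤ ((|g y| / (2 * L)) ^ θ⁻¹) ^ θ := by gcongr
      _ = |g y| / (2 * L) := Real.rpow_inv_rpow (by positivity) hθ.ne'
  have hclose : |g x - g y| ≤ |g y| / 2 :=
    calc |g x - g y| ≤ L * ‖x - y‖ ^ θ := hHolder x y
      _ ≤ L * (|g y| / (2 * L)) := by gcongr
      _ = |g y| / 2 := by field_simp
  linarith [abs_sub_abs_le_abs_sub (g y) (g x), abs_sub_comm (g x) (g y)]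

variable [NormedSpace ℝ E] [MeasurableSpace E] [BorelSpace E] [FiniteDimensional ℝ E]
  (μ : Measure E) [μ.IsAddHaarMeasure]

theorem addHaar_ball_rpow_inv (x : E) {a : ℝ} (ha : 0 < a) :
    μ (ball x (a ^ θ⁻¹)) = ENNReal.ofReal (a ^ ((finrank ℝ E : ℝ) / θ)) * μ (ball 0 1) := by
  rw [Measure.addHaar_ball_of_pos μ x (by positivity), ← Real.rpow_natCast,
    ← Real.rpow_mul ha.le, inv_mul_eq_div]

theorem ofReal_mul_le_lintegral_sq_of_holder (hθ : 0 < θ) (hL : 0 < L)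
    (hHolder : ∀ x y, |g x - g y| ≤ L * ‖x - y‖ ^ θ) (y : E) :
    ENNReal.ofReal ((μ (ball 0 1)).toReal * (|g y| / 2) ^ 2 *
        (|g y| / (2 * L)) ^ ((finrank ℝ E : ℝ) / θ))
      ≤ ∫⁻ x, ENNReal.ofReal (g x ^ 2) ∂μ := by
  rcases (abs_nonneg (g y)).eq_or_lt with hzero | hpos
  · simp [← hzero]
  have hbase : 0 < |g y| / (2 * L) := by positivity
  calc ENNReal.ofReal ((μ (ball 0 1)).toReal * (|g y| / 2) ^ 2 *
        (|g y| / (2 * L)) ^ ((finrank ℝ E : ℝ) / θ))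
      = ENNReal.ofReal ((|g y| / 2) ^ 2) * μ (ball y ((|g y| / (2 * L)) ^ θ⁻¹)) := by
        rw [addHaar_ball_rpow_inv μ y hbase, ENNReal.ofReal_mul (by positivity),
          ENNReal.ofReal_mul (by positivity), ENNReal.ofReal_toReal measure_ball_lt_top.ne]
        ring
    _ ≤ ∫⁻ x, ENNReal.ofReal (g x ^ 2) ∂μ := by
        refine const_mul_measure_le_lintegral measurableSet_ball fun x hx => ?_
        rw [← sq_abs (g x)]
        have hhalf := half_abs_le_abs_of_mem_ball_of_holder hθ hL hHolder hx
        gcongr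

end Holder

theorem holder_L2_interpolation_general (d : ℕ) (θ L : ℝ)
    (hθ : θ ∈ Set.Ioc (0 : ℝ) 1) (hL : 0 < L)
    (g : EuclideanSpace ℝ (Fin d) → ℝ)
    (hHolder : ∀ x y : EuclideanSpace ℝ (Fin d), |g x - g y| ≤ L * ‖x - y‖ ^ θ) :
    (∀ y : EuclideanSpace ℝ (Fin d),
      ENNReal.ofReal
          ((volume (Metric.ball (0 : EuclideanSpace ℝ (Fin d)) 1)).toReal *
            (|g y| / 2) ^ 2 * (|g y| / (2 * L)) ^ ((d : ℝ) / θ))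
        ≤ ∫⁻ x, ENNReal.ofReal ((g x) ^ 2) ∂volume) ∧
    (MemLp g 2 volume →
      (eLpNorm g ⊤ volume).toReal ^ ((2 * θ + d) / θ)
        ≤ 2 ^ ((2 * θ + d) / θ) *
            ((volume (Metric.ball (0 : EuclideanSpace ℝ (Fin d)) 1)).toReal)⁻¹ *
            L ^ ((d : ℝ) / θ) * ∫ x, (g x) ^ 2 ∂volume) := by
  have lower (y : EuclideanSpace ℝ (Fin d)) := by
    simpa only [finrank_euclideanSpace_fin] using
      ofReal_mul_le_lintegral_sq_of_holder volume hθ.1 hL hHolder y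
  refine ⟨lower, fun hL2 => ?_⟩
  have hI : ENNReal.ofReal (∫ x, g x ^ 2) = ∫⁻ x, ENNReal.ofReal (g x ^ 2) :=
    ofReal_integral_eq_lintegral_ofReal hL2.integrable_sq (ae_of_all _ fun x => sq_nonneg _)
  have hV : 0 < (volume (ball (0 : EuclideanSpace ℝ (Fin d)) 1)).toReal :=
    ENNReal.toReal_pos (measure_ball_pos _ _ one_pos).ne' measure_ball_lt_top.ne
  have hI0 : 0 ≤ ∫ x, g x ^ 2 := integral_nonneg fun x => sq_nonneg (g x)
  have hθ0 := hθ.1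
  rw [show (2 * θ + d) / θ = 2 + d / θ by field_simp]
  refine toReal_eLpNorm_top_rpow_le (by positivity) (by positivity) fun y => ?_
  refine rpow_le_of_mul_sq_mul_rpow_le hV (abs_nonneg _) hL (by positivity) ?_
  rw [← ENNReal.ofReal_le_ofReal_iff hI0, hI]
  exact lower y

/-- Hölder–L² interpolation bound for the sup norm (core of Corollary 1.8):
if `g` is continuous with `|g x - g y| ≤ L ‖x - y‖^θ`, then for every `y`,
`ω_d (|g y|/2)² (|g y|/(2L))^{d/θ} ≤ ∫ g²` (as an inequality of extended reals,
trivially true when the integral is infinite), and in particular if `g ∈ L²` then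
`‖g‖_∞^{(2θ+d)/θ} ≤ 2^{(2θ+d)/θ} ω_d⁻¹ L^{d/θ} ‖g‖²_{L²}`, where `ω_d` is the
Lebesgue volume of the unit ball in `ℝᵈ`. -/
theorem holder_L2_interpolation (d : ℕ) (hd : 1 ≤ d) (θ L : ℝ)
    (hθ : θ ∈ Set.Ioc (0 : ℝ) 1) (hL : 0 < L)
    (g : EuclideanSpace ℝ (Fin d) → ℝ) (hg : Continuous g)
    (hHolder : ∀ x y : EuclideanSpace ℝ (Fin d), |g x - g y| ≤ L * ‖x - y‖ ^ θ) :
    (∀ y : EuclideanSpace ℝ (Fin d),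
      ENNReal.ofReal
          ((volume (Metric.ball (0 : EuclideanSpace ℝ (Fin d)) 1)).toReal *
            (|g y| / 2) ^ 2 * (|g y| / (2 * L)) ^ ((d : ℝ) / θ))
        ≤ ∫⁻ x, ENNReal.ofReal ((g x) ^ 2) ∂volume) ∧
    (MemLp g 2 volume →
      (eLpNorm g ⊤ volume).toReal ^ ((2 * θ + d) / θ)
        ≤ 2 ^ ((2 * θ + d) / θ) *
            ((volume (Metric.ball (0 : EuclideanSpace ℝ (Fin d)) 1)).toReal)⁻¹ *
            L ^ ((d : ℝ) / θ) * ∫ x, (g x) ^ 2 ∂volume) :=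
  holder_L2_interpolation_general d θ L hθ hL g hHolder
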